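/- arXiv:2301.02941 — 4 statements merged into one kernel-verified Lean document; each statement's English description precedes it below -/
import Mathlib

section
/- Let V be a real vector space with a bilinear form and let (v_1, v_2, v_3) satisfy the semiorthonormality conditions. Then the braid relation holds for adjacent mutations: L_{v_1} L_{v_2} v_3 = L_{L_{v_1} v_2} (L_{v_1} v_3). -/
/-- For a semiorthonormal triple `(v₁, v₂, v₃)` the braid relation
holds for left mutations `L_a b = b - B a b • a`:
`L_{v₁} (L_{v₂} v₃) = L_{L_{v₁} v₂} (L_{v₁} v₃)`. -/
theorem stmt4 {V : Type*} [AddCommGroup V] [Module ℝ V]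
    (B : V →ₗ[ℝ] V →ₗ[ℝ] ℝ) (v₁ v₂ v₃ : V)
    (h11 : B v₁ v₁ = 1) (h22 : B v₂ v₂ = 1) (h33 : B v₃ v₃ = 1)
    (h21 : B v₂ v₁ = 0) (h31 : B v₃ v₁ = 0) (h32 : B v₃ v₂ = 0) :
    (v₃ - B v₂ v₃ • v₂) - B v₁ (v₃ - B v₂ v₃ • v₂) • v₁ =
      (v₃ - B v₁ v₃ • v₁)
        - B (v₂ - B v₁ v₂ • v₁) (v₃ - B v₁ v₃ • v₁) • (v₂ - B v₁ v₂ • v₁) := by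
  simp only [map_sub, map_smul, LinearMap.sub_apply, LinearMap.smul_apply, smul_eq_mul,
    h11, h21, h31, mul_one]
  module
end

section
/- A Young diagram λ = (λ_1,...,λ_k) of rank s is balanced (meaning a_i = b_i + 1 for all i in Frobenius coordinates) if and only if λ_s ≥ s+1 and (λ_1-(s+1), λ_2-(s+1), ..., λ_s-(s+1))^T = (λ_{s+1}, λ_{s+2}, ..., λ_k). -/
/-- A Young diagram is encoded (0-indexed) by its weakly decreasing sequence of
row lengths `l : ℕ → ℕ` which is eventually zero.  The transposed (conjugate)
diagram: `(λᵀ)_i = #{j : λ_j ≥ i}`. -/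
noncomputable def conj (l : ℕ → ℕ) : ℕ → ℕ := fun i => Nat.card {j : ℕ // i + 1 ≤ l j}

/-- The rank of a diagram (size of its Durfee square): the number of diagonal
boxes, i.e. the largest `s` with `λ_s ≥ s` (1-indexed). -/
noncomputable def rank (l : ℕ → ℕ) : ℕ := Nat.card {i : ℕ // i + 1 ≤ l i}

/-- Arm lengths (Frobenius coordinates): `a_i = λ_i - (i - 1)` (1-indexed),
i.e. `l i - i` (0-indexed). -/
def arm (l : ℕ → ℕ) (i : ℕ) : ℕ := l i - i

/-- Leg lengths (Frobenius coordinates): `b_i = (λᵀ)_i - (i - 1)` (1-indexed). -/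
noncomputable def leg (l : ℕ → ℕ) (i : ℕ) : ℕ := conj l i - i

/-- A Young diagram is balanced if its Frobenius coordinates satisfy
`a_i = b_i + 1` for all `i`. -/
def BalancedDiagram (l : ℕ → ℕ) : Prop := ∀ i, i < rank l → arm l i = leg l i + 1

/-- A downward-closed, bounded predicate on ℕ holds at `i` iff `i` is less than
the number of points where it holds. -/
lemma dc_card (P : ℕ → Prop) (hdc : ∀ a b : ℕ, a ≤ b → P b → P a)
    (N : ℕ) (hN : ∀ i, N ≤ i → ¬ P i) (i : ℕ) :
    P i ↔ i < Nat.card {j : ℕ // P j} := by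
  have hsub : {j : ℕ | P j} ⊆ Set.Iio N := fun j hj => by
    by_contra h; exact hN j (le_of_not_gt h) hj
  have hfin : {j : ℕ | P j}.Finite := (Set.finite_Iio N).subset hsub
  have hc : Nat.card {j : ℕ // P j} = Set.ncard {j : ℕ | P j} := Nat.card_coe_set_eq _
  rw [hc]
  constructor
  · intro hPi
    have h1 : Set.Iic i ⊆ {j : ℕ | P j} := fun a ha => hdc a i ha hPi
    have h2 := Set.ncard_le_ncard h1 hfin
    have h3 : (Set.Iic i).ncard = i + 1 := by
      rw [← Finset.coe_Iic, Set.ncard_coe_finset, Nat.card_Iic]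
    omega
  · intro hlt
    by_contra hnP
    have h1 : {j : ℕ | P j} ⊆ Set.Iio i :=
      fun a ha => lt_of_not_ge fun h => hnP (hdc i a h ha)
    have h2 := Set.ncard_le_ncard h1 (Set.finite_Iio i)
    have h3 : (Set.Iio i).ncard = i := by
      rw [← Finset.coe_Iio, Set.ncard_coe_finset, Nat.card_Iio]
    omega

/-- A diagram `λ` of rank `s` is balanced iff `λ_s ≥ s + 1` and
the transpose of `(λ_1 - (s+1), ..., λ_s - (s+1))` equals `(λ_{s+1}, λ_{s+2}, ...)`.
(Everything 0-indexed: the `s`-th 1-indexed row is `l (s-1)`.) -/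
theorem stmt11 (l : ℕ → ℕ) (hl : Antitone l) (N : ℕ) (hN : ∀ i, N ≤ i → l i = 0) :
    BalancedDiagram l ↔
      ((0 < rank l → rank l + 1 ≤ l (rank l - 1)) ∧
       conj (fun i => if i < rank l then l i - (rank l + 1) else 0)
         = fun j => l (rank l + j)) := by
  have M : ∀ k i : ℕ, k < l i ↔ i < conj l k := by
    intro k i
    exact dc_card (fun j => k + 1 ≤ l j) (fun a b hab hb => le_trans hb (hl hab)) N
      (fun j hj => by simp [hN j hj]) i
  have R : ∀ i : ℕ, i < rank l ↔ i < l i := by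
    intro i
    exact (dc_card (fun j => j + 1 ≤ l j)
      (fun a b hab hb => lt_of_le_of_lt hab (lt_of_lt_of_le hb (hl hab))) N
      (fun j hj => by simp [hN j hj]) i).symm
  set s := rank l with hs
  have hlss : l s ≤ s := by
    by_contra h
    exact absurd ((R s).mpr (lt_of_not_ge h)) (lt_irrefl s)
  have hls : ∀ i, s ≤ i → l i ≤ s := fun i hi => le_trans (hl hi) hlss
  have hbal : BalancedDiagram l ↔ ∀ i, i < s → l i = conj l i + 1 := by
    unfold BalancedDiagram arm leg
    constructor
    · intro h i hi
      have h1 := h i hi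
      have h2 : i < l i := (R i).mp hi
      have h3 : i < conj l i := (M i i).mp h2
      omega
    · intro h i hi
      have h1 := h i hi
      have h2 : i < l i := (R i).mp hi
      have h3 : i < conj l i := (M i i).mp h2
      omega
  have hconjm : conj (fun i => if i < s then l i - (s + 1) else 0)
      = fun j => conj l (s + 1 + j) := by
    funext j
    show Nat.card {i : ℕ // j + 1 ≤ (if i < s then l i - (s + 1) else 0)}
      = Nat.card {i : ℕ // (s + 1 + j) + 1 ≤ l i}
    apply Nat.card_congr
    apply Equiv.subtypeEquivRight
    intro i
    by_cases hi : i < s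
    · simp only [hi, if_true]
      omega
    · simp only [hi, if_false]
      have := hls i (le_of_not_gt hi)
      omega
  rw [hbal, hconjm, funext_iff]
  constructor
  · intro hb
    constructor
    · intro hs0
      have h1 := hb (s - 1) (by omega)
      have h3 : s - 1 < conj l (s - 1) := (M (s - 1) (s - 1)).mp ((R (s - 1)).mp (by omega))
      omega
    · intro j
      apply eq_of_forall_lt_iff
      intro c
      rw [← M (s + 1 + j) c, M c (s + j)]
      constructor
      · intro h
        have hc : c < s := by
          by_contra hcs
          have := hls c (le_of_not_gt hcs)
          omega
        have := hb c hc
        omega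
      · intro h
        have hc : c < s := lt_of_lt_of_le ((M c s).mpr (by omega)) hlss
        have := hb c hc
        omega
  · rintro ⟨H1, H2⟩ i hi
    have hs0 : 0 < s := by omega
    have hl1 : s + 1 ≤ l (s - 1) := H1 hs0
    have hli : s + 1 ≤ l i := le_trans hl1 (hl (by omega))
    apply eq_of_forall_lt_iff
    intro c
    by_cases hcs : c ≤ s
    · have hconj : s ≤ conj l i := by
        have := (M i (s - 1)).mp (by omega : i < l (s - 1))
        omega
      constructor <;> intro <;> omega
    · obtain ⟨j, rfl⟩ : ∃ j, c = s + 1 + j := ⟨c - (s + 1), by omega⟩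
      have e1 : s + 1 + j < l i ↔ i < conj l (s + 1 + j) := M (s + 1 + j) i
      have e2 : i < l (s + j) ↔ s + j < conj l i := M i (s + j)
      rw [H2 j] at e1
      omega
end

section
/- Let λ ∈ YD_{n,n+1} be a Young diagram of height at most n and width at most n+1, and let ρ = (n, n-1, ..., 1). Then the sequence -λ + ρ = (n - λ_n, (n-1) - λ_{n-1}, ..., 1 - λ_1) is non-singular (all absolute values of its terms are distinct and positive) if and only if λ is balanced. -/
/-- A Young diagram is encoded (0-indexed) by its weakly decreasing sequence of
row lengths `l : ℕ → ℕ` which is eventually zero.  The transposed (conjugate)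
diagram: `(λᵀ)_i = #{j : λ_j ≥ i}`. -/

private lemma lowerSet_card_iff (S : Set ℕ) (N : ℕ)
    (hdn : ∀ a b : ℕ, a ≤ b → b ∈ S → a ∈ S) (hb : ∀ a ∈ S, a < N) :
    ∀ k, k < Nat.card S ↔ k ∈ S := by
  have hN : N ∈ {k : ℕ | k ∉ S} := fun h => lt_irrefl N (hb N h)
  set c := sInf {k : ℕ | k ∉ S} with hc
  have hcS : c ∉ S := Nat.sInf_mem ⟨N, hN⟩
  have hSeq : S = Set.Iio c := by
    ext k
    constructor
    · intro hk
      by_contra hlt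
      simp only [Set.mem_Iio, not_lt] at hlt
      exact hcS (hdn c k hlt hk)
    · intro hk
      by_contra hk'
      exact absurd (Nat.sInf_le hk') (not_le.mpr hk)
  have hcard : Nat.card S = c := by
    rw [hSeq, ← Finset.coe_Iio, Nat.card_coe_set_eq, Set.ncard_coe_finset, Nat.card_Iio]
  intro k
  rw [hcard, hSeq]
  exact Iff.rfl

open Finset in
private lemma filter_image_antitone {s : ℕ} {φ : ℕ → ℤ}
    (hφ : ∀ a b : ℕ, a < b → b < s → φ b < φ a) (i : ℕ) (hi : i < s) :
    ((range s).image φ).filter (fun x => φ i < x) = (range i).image φ := by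
  ext x
  simp only [mem_filter, mem_image, mem_range]
  constructor
  · rintro ⟨⟨j, hj, rfl⟩, hlt⟩
    refine ⟨j, ?_, rfl⟩
    by_contra hij
    push_neg at hij
    rcases eq_or_lt_of_le hij with h | h
    · exact absurd hlt (by rw [h]; exact lt_irrefl _)
    · exact absurd hlt (not_lt.mpr (hφ i j h hj).le)
  · rintro ⟨j, hj, rfl⟩
    exact ⟨⟨j, hj.trans hi, rfl⟩, hφ j i hj hi⟩

open Finset in
private lemma antitone_enum_eq {s : ℕ} {φ ψ : ℕ → ℤ}
    (hφ : ∀ a b : ℕ, a < b → b < s → φ b < φ a)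
    (hψ : ∀ a b : ℕ, a < b → b < s → ψ b < ψ a)
    (h : (range s).image φ = (range s).image ψ) :
    ∀ i, i < s → φ i = ψ i := by
  have injφ : ∀ m : ℕ, m ≤ s → Set.InjOn φ (range m) := by
    intro m hm a ha b hb hab
    simp only [coe_range, Set.mem_Iio] at ha hb
    by_contra hne
    rcases Nat.lt_or_ge a b with hlt | hge
    · exact absurd hab (ne_of_gt (hφ a b hlt (hb.trans_le hm)))
    · rcases eq_or_lt_of_le hge with h' | h'
      · exact hne h'.symm
      · exact absurd hab (ne_of_lt (hφ b a h' (ha.trans_le hm)))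
  intro i hi
  obtain ⟨j, hj, hji⟩ : ∃ j, j < s ∧ φ j = ψ i := by
    have : ψ i ∈ (range s).image φ := by
      rw [h]; exact mem_image_of_mem ψ (mem_range.mpr hi)
    simpa only [mem_image, mem_range] using this
  have e1 : ((range s).image φ).filter (fun x => ψ i < x) = (range i).image ψ := by
    rw [h]; exact filter_image_antitone hψ i hi
  have e2 : ((range s).image φ).filter (fun x => ψ i < x) = (range j).image φ := by
    simp only [← hji]
    exact filter_image_antitone hφ j hj
  have injψ : ∀ m : ℕ, m ≤ s → Set.InjOn ψ (range m) := by
    intro m hm a ha b hb hab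
    simp only [coe_range, Set.mem_Iio] at ha hb
    by_contra hne
    rcases Nat.lt_or_ge a b with hlt | hge
    · exact absurd hab (ne_of_gt (hψ a b hlt (hb.trans_le hm)))
    · rcases eq_or_lt_of_le hge with h' | h'
      · exact hne h'.symm
      · exact absurd hab (ne_of_lt (hψ b a h' (ha.trans_le hm)))
  have c1 : (((range s).image φ).filter (fun x => ψ i < x)).card = i := by
    rw [e1, card_image_of_injOn (injψ i hi.le), card_range]
  have c2 : (((range s).image φ).filter (fun x => ψ i < x)).card = j := by
    rw [e2, card_image_of_injOn (injφ j hj.le), card_range]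
  have hij : i = j := by rw [← c1, c2]
  subst hij
  exact hji

/-- For `λ ∈ YD_{n,n+1}` (so `0 ≤ λ_i ≤ n+1`, at most `n` rows),
the weight `-λ + ρ = (n - λ_n, ..., 1 - λ_1)`, whose terms are the integers
`(i + 1) - λ_{i+1}` for `0 ≤ i < n` (0-indexed), is non-singular — all terms
have positive and pairwise distinct absolute values — if and only if `λ` is
balanced. -/
theorem stmt14 (n : ℕ) (l : ℕ → ℕ) (hl : Antitone l) (hw : ∀ i, l i ≤ n + 1)
    (hh : ∀ i, n ≤ i → l i = 0) :
    ((∀ i, i < n → ((i : ℤ) + 1 - l i) ≠ 0) ∧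
     (∀ i, i < n → ∀ j, j < n → i ≠ j →
        |(i : ℤ) + 1 - l i| ≠ |(j : ℤ) + 1 - l j|)) ↔ BalancedDiagram l := by
  classical
  have hcj : ∀ i j : ℕ, j < conj l i ↔ i + 1 ≤ l j := by
    intro i j
    exact lowerSet_card_iff {j : ℕ | i + 1 ≤ l j} n
      (fun a b hab hb => le_trans hb (hl hab))
      (fun a ha => by
        by_contra h; push_neg at h
        simp only [Set.mem_setOf_eq] at ha
        rw [hh a h] at ha; omega) j
  have hrk : ∀ i : ℕ, i < rank l ↔ i + 1 ≤ l i := by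
    intro i
    exact lowerSet_card_iff {i : ℕ | i + 1 ≤ l i} n
      (fun a b hab hb => le_trans (by omega) (le_trans hb (hl hab)))
      (fun a ha => by
        by_contra h; push_neg at h
        simp only [Set.mem_setOf_eq] at ha
        rw [hh a h] at ha; omega) i
  set s := rank l with hsdef
  have hsn : s ≤ n := by
    by_contra h
    push_neg at h
    have := (hrk n).mp h
    rw [hh n le_rfl] at this; omega
  have hconj_bd : ∀ i, conj l i ≤ n := by
    intro i
    by_contra h
    push_neg at h
    have := (hcj i n).mp h
    rw [hh n le_rfl] at this; omega
  have hconj_anti : ∀ a b : ℕ, a ≤ b → conj l b ≤ conj l a := by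
    intro a b hab
    by_contra h
    push_neg at h
    have h1 := (hcj b (conj l a)).mp h
    have h2 : conj l a < conj l a := (hcj a (conj l a)).mpr (le_trans (by omega) h1)
    omega
  have hdiag : ∀ i, i < s → i + 1 ≤ conj l i := fun i hi => (hcj i i).mpr ((hrk i).mp hi)
  have hup : ∀ i, s ≤ i → l i ≤ i := by
    intro i hi
    have h1 : ¬ (i + 1 ≤ l i) := fun hc => absurd ((hrk i).mpr hc) (by omega)
    omega
  have hcross : ∀ i j : ℕ, i < s → s ≤ j → ((conj l i : ℤ) - i) ≠ ((j : ℤ) + 1 - l j) := by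
    intro i j hi hj heq
    by_cases hc : i + 1 ≤ l j
    · have h1 : j < conj l i := (hcj i j).mpr hc
      omega
    · push_neg at hc
      have h1 : ¬ j < conj l i := fun h => absurd ((hcj i j).mp h) (by omega)
      omega
  have hmono : ∀ a b : ℕ, a < b → ((a : ℤ) + 1 - l a) < ((b : ℤ) + 1 - l b) := by
    intro a b hab
    have := hl hab.le
    omega
  constructor
  · rintro ⟨h0, hd⟩
    have harm2 : ∀ i, i < s → i + 2 ≤ l i := by
      intro i hi
      have h1 := (hrk i).mp hi
      have h2 := h0 i (lt_of_lt_of_le hi hsn)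
      omega
    have hAanti : ∀ a b : ℕ, a < b → b < s → ((l b : ℤ) - b - 1) < ((l a : ℤ) - a - 1) := by
      intro a b hab _; have := hmono a b hab; omega
    have hLanti : ∀ a b : ℕ, a < b → b < s → ((conj l b : ℤ) - b) < ((conj l a : ℤ) - a) := by
      intro a b hab _; have := hconj_anti a b hab.le; omega
    set P : Finset ℤ := (Finset.Ico s n).image (fun j : ℕ => (j : ℤ) + 1 - (l j : ℤ)) with hP
    set L : Finset ℤ := (Finset.range s).image (fun k => (conj l k : ℤ) - k) with hL
    set A : Finset ℤ := (Finset.range s).image (fun i => (l i : ℤ) - i - 1) with hA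
    have hPcard : P.card = n - s := by
      rw [hP, Finset.card_image_of_injOn, Nat.card_Ico]
      intro a _ b _ hab
      simp only at hab
      by_contra hne
      rcases Nat.lt_or_ge a b with h | h
      · exact absurd hab (ne_of_lt (hmono a b h))
      · rcases eq_or_lt_of_le h with h' | h'
        · exact hne h'.symm
        · exact absurd hab (ne_of_gt (hmono b a h'))
    have hLcard : L.card = s := by
      rw [hL, Finset.card_image_of_injOn, Finset.card_range]
      intro a ha b hb hab
      simp only [Finset.coe_range, Set.mem_Iio] at ha hb
      simp only at hab
      by_contra hne
      rcases Nat.lt_or_ge a b with h | h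
      · exact absurd hab (ne_of_gt (hLanti a b h hb))
      · rcases eq_or_lt_of_le h with h' | h'
        · exact hne h'.symm
        · exact absurd hab (ne_of_lt (hLanti b a h' ha))
    have hAcard : A.card = s := by
      rw [hA, Finset.card_image_of_injOn, Finset.card_range]
      intro a ha b hb hab
      simp only [Finset.coe_range, Set.mem_Iio] at ha hb
      simp only at hab
      by_contra hne
      rcases Nat.lt_or_ge a b with h | h
      · exact absurd hab (ne_of_gt (hAanti a b h hb))
      · rcases eq_or_lt_of_le h with h' | h'
        · exact hne h'.symm
        · exact absurd hab (ne_of_lt (hAanti b a h' ha))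
    have hPsub : P ⊆ Finset.Icc (1 : ℤ) n := by
      intro x hx
      simp only [hP, Finset.mem_image, Finset.mem_Ico] at hx
      obtain ⟨j, ⟨hjs, hjn⟩, rfl⟩ := hx
      have h1 := hup j hjs
      have h2 := h0 j hjn
      simp only [Finset.mem_Icc]
      omega
    have hLsub : L ⊆ Finset.Icc (1 : ℤ) n := by
      intro x hx
      simp only [hL, Finset.mem_image, Finset.mem_range] at hx
      obtain ⟨k, hk, rfl⟩ := hx
      have h1 := hdiag k hk
      have h2 := hconj_bd k
      simp only [Finset.mem_Icc]
      omega
    have hdisj : Disjoint P L := by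
      rw [Finset.disjoint_left]
      intro x hxP hxL
      simp only [hP, Finset.mem_image, Finset.mem_Ico] at hxP
      obtain ⟨j, ⟨hjs, hjn⟩, rfl⟩ := hxP
      simp only [hL, Finset.mem_image, Finset.mem_range] at hxL
      obtain ⟨k, hk, hkx⟩ := hxL
      exact hcross k j hk hjs hkx
    have hunion : P ∪ L = Finset.Icc (1 : ℤ) n := by
      apply Finset.eq_of_subset_of_card_le (Finset.union_subset hPsub hLsub)
      rw [Finset.card_union_of_disjoint hdisj, hPcard, hLcard, Int.card_Icc]
      omega
    have hAsub : A ⊆ L := by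
      intro x hx
      simp only [hA, Finset.mem_image, Finset.mem_range] at hx
      obtain ⟨i, his, rfl⟩ := hx
      have h2 := harm2 i his
      have hwi := hw i
      have hxmem : ((l i : ℤ) - i - 1) ∈ P ∪ L := by
        rw [hunion]
        simp only [Finset.mem_Icc]
        omega
      rcases Finset.mem_union.mp hxmem with hxP | hxL
      · exfalso
        simp only [hP, Finset.mem_image, Finset.mem_Ico] at hxP
        obtain ⟨j, ⟨hjs, hjn⟩, hjx⟩ := hxP
        have hfj_pos : (0 : ℤ) < (j : ℤ) + 1 - l j := by
          have := h0 j hjn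
          have := hup j hjs
          omega
        exact (hd i (lt_of_lt_of_le his hsn) j hjn (by omega))
          (by rw [abs_of_nonpos (by omega), abs_of_pos hfj_pos]; omega)
      · exact hxL
    have hAL : A = L :=
      Finset.eq_of_subset_of_card_le hAsub (le_of_eq (hLcard.trans hAcard.symm))
    have hterm := antitone_enum_eq (s := s) (φ := fun i => (l i : ℤ) - i - 1)
      (ψ := fun k => (conj l k : ℤ) - k) hAanti hLanti hAL
    intro i hi
    have ht : (l i : ℤ) - i - 1 = (conj l i : ℤ) - i := hterm i hi
    have h1 := (hrk i).mp hi
    have h2 := hdiag i hi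
    unfold arm leg
    omega
  · intro hb
    have hbal : ∀ i, i < s → (l i : ℤ) = conj l i + 1 := by
      intro i hi
      have h1 := (hrk i).mp hi
      have h2 := hdiag i hi
      have h3 := hb i hi
      unfold arm leg at h3
      omega
    constructor
    · intro i hi
      rcases Nat.lt_or_ge i s with h | h
      · have h1 := hbal i h
        have h2 := hdiag i h
        omega
      · have := hup i h
        omega
    · have key : ∀ i j : ℕ, i < j → j < n →
          |(i : ℤ) + 1 - l i| ≠ |(j : ℤ) + 1 - l j| := by
        intro i j hij hjn
        have hmij := hmono i j hij
        rcases Nat.lt_or_ge j s with hjs | hjs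
        · have h1 := hbal j hjs
          have h2 := hdiag j hjs
          rw [abs_of_nonpos (by omega), abs_of_nonpos (by omega)]
          omega
        · rcases Nat.lt_or_ge i s with his | his
          · have h1 := hbal i his
            have h2 := hdiag i his
            have h3 := hup j hjs
            have h4 := hcross i j his hjs
            rw [abs_of_nonpos (by omega), abs_of_nonneg (by omega)]
            omega
          · have h3 := hup i his
            have h4 := hup j hjs
            rw [abs_of_nonneg (by omega), abs_of_nonneg (by omega)]
            omega
      intro i hi j hj hij
      rcases Nat.lt_or_gt_of_ne hij with h | h
      · exact key i j h hj
      · exact (key j i h hi).symm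
end

section
/- Let λ ∈ YD_{n,n+1} be a balanced Young diagram of rank s with |λ| = 2t. Then the cohomological degree predicted by the Borel–Bott–Weil theorem equals t; that is, the number of negative terms of -λ + ρ plus the number of pairs 1 ≤ i < j ≤ n with (-λ+ρ)_i + (-λ+ρ)_j < 0 equals s(s+1)/2 + |λ^b| = |λ|/2, where λ^b = (λ_{s+1},...,λ_n). -/
/-!
A balanced diagram of rank `s` has `λ_i = λᵀ_i + 1` for the first `s` rows. Hence the negative
terms of `-λ + ρ` are exactly the first `s`, and a pair `i < j` of (0-indexed) terms has negative
sum iff `i < λ_j`: for `j < s` this always holds, and for `j ≥ s` both sides say that row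
`i + j + 1 - λ_j` reaches column `i`. Counting pairs column by column gives
`s + ∑_{j<s} j + |λᵇ| = s(s+1)/2 + |λᵇ|`, while counting the boxes of the first `s` rows through
the columns gives `|λ| = s(s+1) + 2|λᵇ|`.
-/

open Finset

lemma Nat.lt_card_subtype_iff_of_antitone {P : ℕ → Prop} (hP : Antitone P)
    (hbdd : ∃ m, ¬ P m) (j : ℕ) : j < Nat.card {j // P j} ↔ P j := by
  classical
  have hiff (j : ℕ) : P j ↔ j < Nat.find hbdd :=
    ⟨fun hj => not_le.1 fun h => Nat.find_spec hbdd (hP h hj),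
      fun h => not_not.1 (Nat.find_min hbdd h)⟩
  have hcard : Nat.card {j // P j} = Nat.find hbdd :=
    (Nat.card_congr (Equiv.subtypeEquivRight hiff)).trans
      ((Nat.card_coe_set_eq (Set.Iio _)).trans (Set.ncard_Iio_nat _))
  rw [hcard, hiff]

lemma Finset.card_filter_range_lt (n m : ℕ) : #{i ∈ range n | i < m} = min n m := by
  rw [← card_range (min n m)]
  congr 1
  ext i
  simp only [mem_filter, mem_range]
  omega

lemma Finset.sum_range_eq_sum_range_add_sum_range_add {M : Type*} [AddCommMonoid M]
    {f : ℕ → M} {n : ℕ} (hf : ∀ i, n ≤ i → f i = 0) (s : ℕ) :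
    ∑ i ∈ range n, f i = ∑ i ∈ range s, f i + ∑ i ∈ range n, f (s + i) := by
  rw [← sum_range_add]
  exact sum_subset (range_subset_range.2 (Nat.le_add_left n s))
    fun i _ hi => hf i (not_lt.1 (mem_range.not.1 hi))

lemma Finset.card_filter_lt_and_lt (n : ℕ) (f : ℕ → ℕ) :
    #{p ∈ range n ×ˢ range n | p.1 < p.2 ∧ p.1 < f p.2} = ∑ j ∈ range n, min j (f j) := by
  simp_rw [← lt_min_iff, card_filter, sum_product_right, ← card_filter, card_filter_range_lt]
  refine sum_congr rfl fun j hj => ?_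
  have := mem_range.1 hj
  omega

section Diagram

variable {l : ℕ → ℕ} {n : ℕ} (hl : Antitone l) (h0 : l n = 0)
include hl h0

lemma eq_zero_of_le_of_apply_eq_zero {i : ℕ} (hi : n ≤ i) : l i = 0 :=
  Nat.eq_zero_of_le_zero (h0 ▸ hl hi)

lemma lt_conj_iff_succ_le (i j : ℕ) : j < conj l i ↔ i + 1 ≤ l j :=
  Nat.lt_card_subtype_iff_of_antitone (fun _ _ hjk h => h.trans (hl hjk)) ⟨n, by omega⟩ j

lemma lt_rank_iff_succ_le (i : ℕ) : i < rank l ↔ i + 1 ≤ l i :=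
  Nat.lt_card_subtype_iff_of_antitone (fun a b hab h => by have := hl hab; omega)
    ⟨n, by omega⟩ i

lemma rank_le_of_apply_eq_zero : rank l ≤ n := by
  by_contra! h
  have := (lt_rank_iff_succ_le hl h0 n).1 h
  omega

lemma conj_le_of_apply_eq_zero (i : ℕ) : conj l i ≤ n := by
  by_contra! h
  have := (lt_conj_iff_succ_le hl h0 i n).1 h
  omega

lemma apply_le_self_of_rank_le {j : ℕ} (hj : rank l ≤ j) : l j ≤ j := by
  by_contra! h
  have := (lt_rank_iff_succ_le hl h0 j).2 h
  omega

lemma apply_le_rank_of_rank_le {j : ℕ} (hj : rank l ≤ j) : l j ≤ rank l :=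
  (hl hj).trans (apply_le_self_of_rank_le hl h0 le_rfl)

lemma rank_le_conj {i : ℕ} (hi : i < rank l) : rank l ≤ conj l i := by
  have hlast := (lt_rank_iff_succ_le hl h0 (rank l - 1)).1 (by omega)
  have := (lt_conj_iff_succ_le hl h0 i (rank l - 1)).2 (by omega)
  omega

lemma conj_eq_card_filter (i : ℕ) : conj l i = #{k ∈ range n | i < l k} := by
  rw [← card_range (conj l i)]
  congr 1
  ext k
  have := conj_le_of_apply_eq_zero hl h0 i
  have := lt_conj_iff_succ_le hl h0 i k
  simp only [mem_filter, mem_range]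
  omega

lemma sum_range_conj (m : ℕ) : ∑ i ∈ range m, conj l i = ∑ k ∈ range n, min (l k) m := by
  simp_rw [conj_eq_card_filter hl h0, card_filter]
  rw [sum_comm]
  simp_rw [← card_filter, card_filter_range_lt, min_comm]

variable (hb : BalancedDiagram l)
include hb

lemma eq_conj_add_one_of_lt_rank {i : ℕ} (hi : i < rank l) : l i = conj l i + 1 := by
  have harm := hb i hi
  have := (lt_rank_iff_succ_le hl h0 i).1 hi
  have := rank_le_conj hl h0 hi
  simp only [arm, leg] at harm
  omega

lemma rank_lt_apply_of_lt_rank {i : ℕ} (hi : i < rank l) : rank l < l i := by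
  have := eq_conj_add_one_of_lt_rank hl h0 hb hi
  have := rank_le_conj hl h0 hi
  omega

lemma lt_rank_iff_succ_lt (i : ℕ) : i < rank l ↔ i + 1 < l i := by
  refine ⟨fun hi => ?_, fun h => (lt_rank_iff_succ_le hl h0 i).2 h.le⟩
  have := rank_lt_apply_of_lt_rank hl h0 hb hi
  omega

lemma add_add_three_le_iff {i j : ℕ} (hij : i < j) : i + j + 3 ≤ l i + l j ↔ i < l j := by
  rcases lt_or_ge j (rank l) with hj | hj
  · have := rank_lt_apply_of_lt_rank hl h0 hb hj
    have := rank_lt_apply_of_lt_rank hl h0 hb (hij.trans hj)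
    omega
  have hlj := apply_le_self_of_rank_le hl h0 hj
  rcases lt_or_ge i (rank l) with hi | hi
  · -- column `i` has length `l i - 1`, so the inequality says that row `i + j + 1 - l j` reaches it
    have := eq_conj_add_one_of_lt_rank hl h0 hb hi
    rw [show i + j + 3 ≤ l i + l j ↔ i + j + 1 - l j < conj l i by omega,
      lt_conj_iff_succ_le hl h0]
    constructor
    · intro h
      by_contra! hlji
      have := hl (show j ≤ i + j + 1 - l j by omega)
      omega
    · intro h
      have := hl (show i + j + 1 - l j ≤ j by omega)
      omega
  · have := apply_le_self_of_rank_le hl h0 hi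
    have := apply_le_rank_of_rank_le hl h0 hj
    omega

lemma sum_range_min_self_apply :
    ∑ j ∈ range n, min j (l j) = ∑ j ∈ range (rank l), j + ∑ i ∈ range n, l (rank l + i) := by
  rw [sum_range_eq_sum_range_add_sum_range_add
    (fun j hj => by simp [eq_zero_of_le_of_apply_eq_zero hl h0 hj]) (rank l)]
  congr 1
  · refine sum_congr rfl fun j hj => ?_
    have := rank_lt_apply_of_lt_rank hl h0 hb (mem_range.1 hj)
    have := mem_range.1 hj
    omega
  · refine sum_congr rfl fun i _ => ?_
    have := apply_le_self_of_rank_le hl h0 (Nat.le_add_right (rank l) i)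
    omega

lemma sum_range_eq_rank_mul_add :
    ∑ i ∈ range n, l i = rank l * (rank l + 1) + 2 * ∑ i ∈ range n, l (rank l + i) := by
  have hzero (k : ℕ) (hk : n ≤ k) : l k = 0 := eq_zero_of_le_of_apply_eq_zero hl h0 hk
  have hsquare : ∑ k ∈ range n, min (l k) (rank l)
      = rank l * rank l + ∑ i ∈ range n, l (rank l + i) := by
    rw [sum_range_eq_sum_range_add_sum_range_add (fun k hk => by simp [hzero k hk]) (rank l)]
    congr 1
    · rw [sum_congr rfl fun k hk =>
        min_eq_right (rank_lt_apply_of_lt_rank hl h0 hb (mem_range.1 hk)).le,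
        sum_const, card_range, smul_eq_mul]
    · exact sum_congr rfl fun i _ =>
        min_eq_left (apply_le_rank_of_rank_le hl h0 (Nat.le_add_right _ _))
  calc ∑ i ∈ range n, l i
      = ∑ i ∈ range (rank l), (conj l i + 1) + ∑ i ∈ range n, l (rank l + i) := by
        rw [sum_range_eq_sum_range_add_sum_range_add hzero (rank l)]
        congr 1
        exact sum_congr rfl fun i hi => eq_conj_add_one_of_lt_rank hl h0 hb (mem_range.1 hi)
    _ = rank l * (rank l + 1) + 2 * ∑ i ∈ range n, l (rank l + i) := by
        rw [sum_add_distrib, sum_range_conj hl h0, hsquare, sum_const, card_range]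
        ring

end Diagram

theorem stmt15_general (n t : ℕ) (l : ℕ → ℕ) (hl : Antitone l)
    (hh : ∀ i, n ≤ i → l i = 0) (hb : BalancedDiagram l)
    (ht : ∑ i ∈ Finset.range n, l i = 2 * t) :
    ((Finset.range n).filter (fun i : ℕ => ((i : ℤ) + 1 - l i) < 0)).card
      + (((Finset.range n ×ˢ Finset.range n).filter
          (fun p : ℕ × ℕ => p.1 < p.2 ∧
            ((p.1 : ℤ) + 1 - l p.1) + ((p.2 : ℤ) + 1 - l p.2) < 0)).card)
      = rank l * (rank l + 1) / 2 + ∑ i ∈ Finset.range n, l (rank l + i) ∧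
    rank l * (rank l + 1) / 2 + ∑ i ∈ Finset.range n, l (rank l + i) = t := by
  have h0 := hh n le_rfl
  have hneg : ((range n).filter (fun i : ℕ => ((i : ℤ) + 1 - l i) < 0)).card = rank l := by
    rw [← card_range (rank l)]
    congr 1
    ext i
    have := lt_rank_iff_succ_lt hl h0 hb i
    have := rank_le_of_apply_eq_zero hl h0
    simp only [mem_filter, mem_range]
    omega
  have hpairs : ((range n ×ˢ range n).filter (fun p : ℕ × ℕ => p.1 < p.2 ∧
      ((p.1 : ℤ) + 1 - l p.1) + ((p.2 : ℤ) + 1 - l p.2) < 0)).card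
      = ∑ j ∈ range n, min j (l j) := by
    rw [← card_filter_lt_and_lt]
    congr 1
    refine filter_congr fun p _ => and_congr_right fun hp => ?_
    rw [← add_add_three_le_iff hl h0 hb hp]
    omega
  have hgauss : (∑ j ∈ range (rank l), j + rank l) * 2 = rank l * (rank l + 1) := by
    rw [← sum_range_succ, sum_range_id_mul_two, Nat.add_sub_cancel, mul_comm]
  have hsize := sum_range_eq_rank_mul_add hl h0 hb
  rw [hneg, hpairs, sum_range_min_self_apply hl h0 hb]
  omega

/-- For a balanced `λ ∈ YD_{n,n+1}` of rank `s` with `|λ| = 2t`,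
the Borel–Bott–Weil degree — the number of negative terms of `-λ + ρ` plus the
number of pairs of terms with negative sum — equals `s(s+1)/2 + |λᵇ|`, which
equals `t`.  (The terms of `-λ + ρ` are `(i+1) - λ_{i+1}`, `0 ≤ i < n`.) -/
theorem stmt15 (n t : ℕ) (l : ℕ → ℕ) (hl : Antitone l) (hw : ∀ i, l i ≤ n + 1)
    (hh : ∀ i, n ≤ i → l i = 0) (hb : BalancedDiagram l)
    (ht : ∑ i ∈ Finset.range n, l i = 2 * t) :
    ((Finset.range n).filter (fun i : ℕ => ((i : ℤ) + 1 - l i) < 0)).card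
      + (((Finset.range n ×ˢ Finset.range n).filter
          (fun p : ℕ × ℕ => p.1 < p.2 ∧
            ((p.1 : ℤ) + 1 - l p.1) + ((p.2 : ℤ) + 1 - l p.2) < 0)).card)
      = rank l * (rank l + 1) / 2 + ∑ i ∈ Finset.range n, l (rank l + i) ∧
    rank l * (rank l + 1) / 2 + ∑ i ∈ Finset.range n, l (rank l + i) = t :=
  stmt15_general n t l hl hh hb ht
end
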